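/- Let c ∈ ℂ and R = ℂ[t, t^{-1}, u | u² = t⁴ − 2ct² + 1]. Let (P_{−3,k})_{k ≥ −4} be the sequence of complex numbers determined by the initial values P_{−3,−4} = 0, P_{−3,−3} = 1, P_{−3,−2} = 0, P_{−3,−1} = 0 and the recursion (6+2k)P_{−3,k} = 4kc·P_{−3,k−2} − 2(k−3)·P_{−3,k−4} for k ≥ 0. Then for every odd integer l ≤ −5, in Ω¹_R/dR one has (class of t^l u dt) = P_{−3,−l−4}·(c ω_{−3} + ω_{−1}). -/

import Mathlib

/-!
Differentiating `u² = t⁴ − 2ct² + 1` gives `2u du = (4t³ − 4ct) dt`. Multiplying by `t^m u` and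
using that `d(t^n u)` is exact, i.e. `t^n du ≡ −n t^(n−1) u dt`, yields a three-term relation among
`ω_{m+3}, ω_{m+1}, ω_{m−1}`; indexed by `k = −l − 4` it is the recursion defining `P_{−3,k}`.
Hence `ω_{−k−4} − P_{−3,k} (c ω_{−3} + ω_{−1})` satisfies the same recursion. Its values at `k = −1`
and `k = −3` make it vanish at `k = 1`, and at `k = 3` the coefficient `k − 3` of the oldest term
vanishes, so it vanishes at every odd `k ≥ 1`.
-/

noncomputable section
open Polynomial LaurentPolynomial

/-- The ring `R = ℂ[t,t⁻¹][u]/(u² − (t⁴ − 2ct² + 1))`, realized by adjoining a root `u`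
of `X² − (t⁴ − 2ct² + 1)` to the ring of Laurent polynomials `ℂ[t,t⁻¹]`. -/
abbrev DJKM (c : ℂ) : Type :=
  AdjoinRoot ((X : Polynomial (LaurentPolynomial ℂ)) ^ 2 -
    Polynomial.C (T 4 - 2 * LaurentPolynomial.C c * T 2 + 1))

/-- The element `t^i` of `R`, for `i : ℤ`. -/
def tp (c : ℂ) (i : ℤ) : DJKM c := AdjoinRoot.of _ (T i)

/-- The element `u` of `R`. -/
def uu (c : ℂ) : DJKM c := AdjoinRoot.root _

/-- The subspace `dR ⊆ Ω¹_R` of exact differentials. -/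
def dR (c : ℂ) : Submodule ℂ (KaehlerDifferential ℂ (DJKM c)) :=
  LinearMap.range (KaehlerDifferential.D ℂ (DJKM c)).toLinearMap

/-- The class of `f·dg` in `Ω¹_R/dR`. -/
def cls (c : ℂ) (f g : DJKM c) : KaehlerDifferential ℂ (DJKM c) ⧸ dR c :=
  Submodule.Quotient.mk (f • KaehlerDifferential.D ℂ (DJKM c) g)

/-- `ω_k` : the class of `t^k·u·dt` in `Ω¹_R/dR`. -/
def w (c : ℂ) (k : ℤ) : KaehlerDifferential ℂ (DJKM c) ⧸ dR c :=
  cls c (tp c k * uu c) (tp c 1)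

/-- `ω₀` : the class of `t⁻¹·dt` in `Ω¹_R/dR`. -/
def w0 (c : ℂ) : KaehlerDifferential ℂ (DJKM c) ⧸ dR c :=
  cls c (tp c (-1)) (tp c 1)

theorem Derivation.leibniz_zpow_monoidHom {R A M : Type*} [CommSemiring R] [CommRing A]
    [Algebra R A] [AddCommGroup M] [Module A M] [Module R M] (D : Derivation R A M)
    (f : Multiplicative ℤ →* A) (n : ℤ) :
    D (f (.ofAdd n)) = ((n : A) * f (.ofAdd (n - 1))) • D (f (.ofAdd 1)) := by
  have hmul (a b : ℤ) : f (.ofAdd (a + b)) = f (.ofAdd a) * f (.ofAdd b) := by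
    rw [ofAdd_add, map_mul]
  induction n using Int.induction_on with
  | zero => simp
  | succ i ih =>
    have hi : f (.ofAdd 1) * f (.ofAdd (i - 1)) = f (.ofAdd i) := by
      rw [← hmul, add_sub_cancel]
    rw [hmul, D.leibniz, ih, add_sub_cancel_right]
    push_cast
    linear_combination (norm := module) (i : A) • hi • D (f (.ofAdd 1))
  | pred i ih =>
    have hl := D.leibniz (f (.ofAdd (-i - 1))) (f (.ofAdd 1))
    have h1 : f (.ofAdd (-1)) * f (.ofAdd 1) = 1 := by rw [← hmul]; simp
    have h2 : f (.ofAdd (-1)) * f (.ofAdd (-i - 1)) = f (.ofAdd (-i - 1 - 1)) := by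
      rw [← hmul]; ring_nf
    rw [← hmul, sub_add_cancel, ih] at hl
    push_cast
    linear_combination (norm := module) -(f (.ofAdd (-1)) • hl) - h1 • D (f (.ofAdd (-i - 1)))
      - ((i : A) + 1) • h2 • D (f (.ofAdd 1))

def tpHom (c : ℂ) : Multiplicative ℤ →* DJKM c :=
  (AdjoinRoot.of _ : LaurentPolynomial ℂ →+* DJKM c).toMonoidHom.comp (AddMonoidAlgebra.of ℂ ℤ)

section

variable (c : ℂ)

local notation "𝒅" => KaehlerDifferential.D ℂ (DJKM c)

theorem tpHom_ofAdd (i : ℤ) : tpHom c (.ofAdd i) = tp c i := rfl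

theorem tp_add (i j : ℤ) : tp c (i + j) = tp c i * tp c j := by
  simp only [← tpHom_ofAdd, ofAdd_add, map_mul]

theorem uu_sq : uu c ^ 2 = tp c 4 - (2 * c) • tp c 2 + 1 := by
  have h := AdjoinRoot.mk_self (f := (X : Polynomial (LaurentPolynomial ℂ)) ^ 2 -
    Polynomial.C (T 4 - 2 * LaurentPolynomial.C c * T 2 + 1))
  rw [map_sub, map_pow, AdjoinRoot.mk_X, AdjoinRoot.mk_C, sub_eq_zero] at h
  rw [uu, h, Algebra.smul_def, AdjoinRoot.algebraMap_eq', RingHom.comp_apply,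
    LaurentPolynomial.algebraMap_apply, Algebra.algebraMap_self_apply]
  simp only [tp, map_add, map_sub, map_mul, map_one, map_ofNat]

theorem D_tp (i : ℤ) : 𝒅 (tp c i) = (i : ℂ) • (tp c (i - 1) • 𝒅 (tp c 1)) := by
  rw [← tpHom_ofAdd, (𝒅).leibniz_zpow_monoidHom, mul_smul, Int.cast_smul_eq_zsmul,
    Int.cast_smul_eq_zsmul]
  rfl

theorem two_uu_smul_D_uu :
    (2 : ℂ) • (uu c • 𝒅 (uu c)) =
      (4 : ℂ) • (tp c 3 • 𝒅 (tp c 1)) - (4 * c) • (tp c 1 • 𝒅 (tp c 1)) := by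
  have h : 𝒅 (uu c ^ 2) = (2 : ℂ) • (uu c • 𝒅 (uu c)) := by
    rw [pow_two (uu c), Derivation.leibniz, two_smul]
  rw [← h, uu_sq]
  simp only [map_add, map_sub, Derivation.map_smul, D_tp c 4, D_tp c 2,
    Derivation.map_one_eq_zero]
  norm_num
  rw [smul_smul]
  ring_nf

theorem mkQ_D (f : DJKM c) : (dR c).mkQ (𝒅 f) = 0 :=
  (Submodule.Quotient.mk_eq_zero _).2 ⟨f, rfl⟩

theorem mkQ_tp_mul_uu_smul_D_tp (k : ℤ) : (dR c).mkQ ((tp c k * uu c) • 𝒅 (tp c 1)) = w c k :=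
  rfl

theorem mkQ_tp_smul_D_uu (n : ℤ) : (dR c).mkQ (tp c n • 𝒅 (uu c)) = -(n : ℂ) • w c (n - 1) := by
  have h := mkQ_D c (tp c n * uu c)
  rw [Derivation.leibniz, D_tp, smul_comm (uu c) (n : ℂ), smul_smul, mul_comm (uu c)] at h
  simp only [map_add, map_smul, mkQ_tp_mul_uu_smul_D_tp] at h
  linear_combination (norm := module) h

theorem w_recurrence (m : ℤ) :
    (2 * m + 12 : ℂ) • w c (m + 3) =
      (4 * c * (m + 3)) • w c (m + 1) - (2 * m : ℂ) • w c (m - 1) := by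
  have hu : tp c m * uu c * uu c = tp c (m + 4) - (2 * c) • tp c (m + 2) + tp c m := by
    rw [mul_assoc, ← pow_two, uu_sq, mul_add, mul_sub, mul_smul_comm, mul_one, tp_add, tp_add]
  have h3 : tp c m * uu c * tp c 3 = tp c (m + 3) * uu c := by rw [mul_right_comm, tp_add]
  have h1 : tp c m * uu c * tp c 1 = tp c (m + 1) * uu c := by rw [mul_right_comm, tp_add]
  have key := congrArg (fun x => (dR c).mkQ ((tp c m * uu c) • x)) (two_uu_smul_D_uu c)
  simp only [smul_sub, smul_comm (tp c m * uu c) (_ : ℂ), smul_smul, hu, h3, h1, add_smul,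
    sub_smul, smul_assoc, map_add, map_sub, map_smul, mkQ_tp_smul_D_uu,
    mkQ_tp_mul_uu_smul_D_tp] at key
  rw [show m + 4 - 1 = m + 3 by ring, show m + 2 - 1 = m + 1 by ring] at key
  push_cast at key
  linear_combination (norm := module) -key

end

theorem eq_zero_of_smul_recurrence {K M : Type*} [Semiring K] [AddCommMonoid M] [Module K M]
    {a : ℕ → M} (f g h : ℕ → K) (hf : ∀ n, IsSMulRegular M (f n))
    (hrec : ∀ n, f n • a (n + 2) = g n • a (n + 1) + h n • a n) (h0 : a 0 = 0) (h1 : a 1 = 0)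
    (n : ℕ) : a n = 0 := by
  suffices ∀ n, a n = 0 ∧ a (n + 1) = 0 from (this n).1
  intro n
  induction n with
  | zero => exact ⟨h0, h1⟩
  | succ n ih =>
    refine ⟨ih.2, hf n (?_ : f n • a (n + 2) = f n • 0)⟩
    rw [hrec, ih.1, ih.2, smul_zero, smul_zero, smul_zero, add_zero]

def DJKMRecurrence {M : Type*} [AddCommGroup M] [Module ℂ M] (c : ℂ) (x : ℤ → M) : Prop :=
  ∀ k : ℤ, 0 ≤ k →
    ((6 : ℂ) + 2 * k) • x k = (4 * k * c) • x (k - 2) - (2 * (k - 3) : ℂ) • x (k - 4)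

namespace DJKMRecurrence

variable {M : Type*} [AddCommGroup M] [Module ℂ M] {c : ℂ}

theorem smul_const {P : ℤ → ℂ} (hP : DJKMRecurrence c P) (v : M) :
    DJKMRecurrence c (fun k => P k • v) := fun k hk => by
  simp only [smul_smul, ← sub_smul]
  exact congrArg (· • v) (hP k hk)

theorem sub {x y : ℤ → M} (hx : DJKMRecurrence c x) (hy : DJKMRecurrence c y) :
    DJKMRecurrence c (x - y) := fun k hk => by
  simp only [Pi.sub_apply, smul_sub, hx k hk, hy k hk]
  abel

theorem odd_eq_zero {x : ℤ → M} (hx : DJKMRecurrence c x) (hinit : c • x (-1) + x (-3) = 0)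
    (n : ℕ) : x (2 * n + 1) = 0 := by
  have hx1 : x 1 = 0 := by
    have h := hx 1 zero_le_one
    norm_num at h
    refine IsSMulRegular.of_ne_zero (by norm_num : (8 : ℂ) ≠ 0) (?_ : (8 : ℂ) • x 1 = (8 : ℂ) • 0)
    linear_combination (norm := module) h + (4 : ℂ) • hinit
  have hx3 : x 3 = 0 := by
    have h := hx 3 (by norm_num)
    norm_num [hx1] at h
    exact h
  refine eq_zero_of_smul_recurrence (a := fun n : ℕ => x (2 * n + 1))
    (fun n => (6 : ℂ) + 2 * (2 * n + 5)) (fun n => 4 * (2 * n + 5) * c) (fun n => -2 * (2 * n + 2))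
    (fun n => IsSMulRegular.of_ne_zero (by norm_cast)) (fun n => ?_) hx1 hx3 n
  have h := hx (2 * n + 5) (by positivity)
  rw [show (2 * n + 5 : ℤ) - 2 = 2 * (n + 1 : ℕ) + 1 by push_cast; ring,
    show (2 * n + 5 : ℤ) - 4 = 2 * n + 1 by ring,
    show (2 * n + 5 : ℤ) = 2 * (n + 2 : ℕ) + 1 by push_cast; ring] at h
  push_cast at h ⊢
  linear_combination (norm := module) h

end DJKMRecurrence

theorem djkmRecurrence_w (c : ℂ) : DJKMRecurrence c (fun k => w c (-k - 4)) := fun k _ => by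
  have hw := w_recurrence c (-k - 3)
  rw [show -k - 3 + 3 = -(k - 4) - 4 by ring, show -k - 3 + 1 = -(k - 2) - 4 by ring,
    show -k - 3 - 1 = -k - 4 by ring] at hw
  push_cast at hw
  linear_combination (norm := module) -hw

theorem stmt9_general (c : ℂ) (P : ℤ → ℂ)
    (h3 : P (-3) = 1) (h1 : P (-1) = 0)
    (hrec : ∀ k : ℤ, 0 ≤ k →
      ((6 : ℂ) + 2 * (k : ℂ)) * P k = 4 * (k : ℂ) * c * P (k - 2) - 2 * ((k : ℂ) - 3) * P (k - 4)) :
    ∀ l : ℤ, l ≤ -5 → Odd l → w c l = P (-l - 4) • (c • w c (-3) + w c (-1)) := by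
  intro l hl hodd
  obtain ⟨n, rfl⟩ : ∃ n : ℕ, l = -(2 * n + 1) - 4 := ⟨(-l - 5).toNat / 2, by grind⟩
  set v := c • w c (-3) + w c (-1) with hv
  have hdiff := (djkmRecurrence_w c).sub (DJKMRecurrence.smul_const hrec v)
  have h := hdiff.odd_eq_zero (by norm_num [h1, h3]; linear_combination (norm := module) -hv) n
  rw [show -(-(2 * (n : ℤ) + 1) - 4) - 4 = 2 * n + 1 by ring]
  exact sub_eq_zero.1 h

/-- For odd `l ≤ −5`, the class of `t^l u dt` equals `P_{−3,−l−4}·(c·ω₋₃ + ω₋₁)`. -/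
theorem stmt9 (c : ℂ) (P : ℤ → ℂ)
    (h4 : P (-4) = 0) (h3 : P (-3) = 1) (h2 : P (-2) = 0) (h1 : P (-1) = 0)
    (hrec : ∀ k : ℤ, 0 ≤ k →
      ((6 : ℂ) + 2 * (k : ℂ)) * P k = 4 * (k : ℂ) * c * P (k - 2) - 2 * ((k : ℂ) - 3) * P (k - 4)) :
    ∀ l : ℤ, l ≤ -5 → Odd l → w c l = P (-l - 4) • (c • w c (-3) + w c (-1)) :=
  stmt9_general c P h3 h1 hrec
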